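/- arXiv:0907.4317 — 2 statements merged into one kernel-verified Lean document; each statement's English description precedes it below -/
import Mathlib

section
/- Let X be a Banach space with a basis, let R be a tree of finite block sequences on X, and let F_R = {(min supp x_1, …, min supp x_k) : (x_1,…,x_k) ∈ R} be the associated tree of finite strictly increasing integer sequences. If both R and F_R are well-founded, then o(R) ≤ o(F_R). -/
noncomputable section

open Filter Topology

namespace HerL1

/-! ### Trees on a set and their derivatives -/

/-- A tree on `α`: a set of (nonempty) finite sequences closed under nonempty prefixes. -/
def IsTree {α : Type} (T : Set (List α)) : Prop :=
  ∀ l ∈ T, ∀ l' : List α, l' <+: l → l' ≠ [] → l' ∈ T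

/-- The derivative of a tree: members admitting a proper extension inside the tree. -/
def treeDeriv {α : Type} (T : Set (List α)) : Set (List α) :=
  {l | l ∈ T ∧ ∃ x : α, l ++ [x] ∈ T}

/-- Transfinite iteration of the tree derivative. -/
noncomputable def derivIter {α : Type} (T : Set (List α)) : Ordinal.{0} → Set (List α) :=
  WellFounded.fix wellFounded_lt fun o ih =>
    if o = 0 then T else ⋂ p : {β : Ordinal.{0} // β < o}, treeDeriv (ih p.1 p.2)

/-- A tree is well founded if it has no infinite branch. -/
def IsWellFoundedTree {α : Type} (T : Set (List α)) : Prop :=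
  ∀ f : ℕ → α, ∃ k : ℕ, (List.ofFn fun i : Fin (k + 1) => f i.1) ∉ T

/-- The order of a (well-founded) tree: the least ordinal whose derivative is empty. -/
noncomputable def treeOrder {α : Type} (T : Set (List α)) : Ordinal.{0} :=
  sInf {o | derivIter T o = ∅}

/-! ### Schreier families -/

/-- `F < G` for finite sets of naturals. -/
def SuccFinset (F G : Finset ℕ) : Prop := ∀ a ∈ F, ∀ b ∈ G, a < b

/-- A system of generalized Schreier families `(S_ξ)` defined by the usual transfinite
recursion, with some choice of cofinal sequences at limit ordinals. -/
structure SchreierSystem where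
  S : Ordinal.{0} → Set (Finset ℕ)
  zero_def : S 0 = {F | F = ∅ ∨ ∃ n : ℕ, F = {n}}
  succ_def : ∀ ξ : Ordinal.{0}, S (ξ + 1) =
    {F | ∃ (m : ℕ) (f : Fin m → Finset ℕ),
      (∀ i, f i ∈ S ξ) ∧
      (∀ i j : Fin m, i < j → SuccFinset (f i) (f j)) ∧
      (∀ a ∈ F, m ≤ a) ∧
      F = Finset.univ.biUnion f}
  limit_def : ∀ ξ : Ordinal.{0}, Order.IsSuccLimit ξ → ∃ seq : ℕ → Ordinal.{0},
    StrictMono seq ∧ (∀ n, seq n < ξ) ∧ (∀ β < ξ, ∃ n, β < seq n) ∧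
    S ξ = {F | ∃ n : ℕ, F ∈ S (seq n) ∧ ∀ a ∈ F, n ≤ a}

/-- Maximal member of a family of finite sets. -/
def IsMaximalIn (Sfam : Set (Finset ℕ)) (F : Finset ℕ) : Prop :=
  F ∈ Sfam ∧ ∀ G ∈ Sfam, F ⊆ G → G = F

/-- The first Schreier family (equivalently, admissible sets): `#F ≤ min F`. -/
def AdmissFam : Set (Finset ℕ) := {F | ∀ n ∈ F, F.card ≤ n}

/-! ### Schauder bases, block sequences -/

/-- A Schauder basis of a normed space: every vector has a unique expansion. -/
structure SchauderBasis (X : Type) [NormedAddCommGroup X] [NormedSpace ℝ X] where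
  e : ℕ → X
  expansion : ∀ x : X, ∃! a : ℕ → ℝ,
    Tendsto (fun N => ∑ i ∈ Finset.range N, a i • e i) atTop (𝓝 x)

variable {X : Type} [NormedAddCommGroup X] [NormedSpace ℝ X]

/-- The coordinates of a vector with respect to a Schauder basis. -/
noncomputable def SchauderBasis.coeff (b : SchauderBasis X) (x : X) : ℕ → ℝ :=
  (b.expansion x).exists.choose

/-- The support of a vector with respect to a Schauder basis. -/
def SchauderBasis.suppSet (b : SchauderBasis X) (x : X) : Set ℕ := {n | b.coeff x n ≠ 0}

/-- `min supp x`. -/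
noncomputable def SchauderBasis.minSupp (b : SchauderBasis X) (x : X) : ℕ := sInf (b.suppSet x)

/-- Finitely supported vector. -/
def SchauderBasis.FinSupp (b : SchauderBasis X) (x : X) : Prop := (b.suppSet x).Finite

/-- `x < y`: the support of `x` lies entirely before the support of `y`. -/
def SchauderBasis.Before (b : SchauderBasis X) (x y : X) : Prop :=
  ∃ N : ℕ, (∀ n ∈ b.suppSet x, n ≤ N) ∧ ∀ n ∈ b.suppSet y, N < n

/-- A block vector: nonzero and finitely supported. -/
def SchauderBasis.IsBlockVector (b : SchauderBasis X) (x : X) : Prop :=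
  x ≠ 0 ∧ b.FinSupp x

/-- An infinite block sequence. -/
def SchauderBasis.IsBlockSeq (b : SchauderBasis X) (u : ℕ → X) : Prop :=
  (∀ n, b.IsBlockVector (u n)) ∧ ∀ n, b.Before (u n) (u (n + 1))

/-! ### Equivalence with the unit bases of `ℓ1^k`, `ℓ∞^k`, `ℓp^k` -/

/-- A finite sequence of normalized vectors `C`-equivalent to the unit basis of `ℓ1^k`. -/
def IsL1SeqWith (C : ℝ) (l : List X) : Prop :=
  (∀ x ∈ l, ‖x‖ = 1) ∧
  ∀ a : Fin l.length → ℝ,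
    (1 / C) * (∑ i, |a i|) ≤ ‖∑ i, a i • l.get i‖ ∧
    ‖∑ i, a i • l.get i‖ ≤ C * ∑ i, |a i|

/-- A finite sequence of normalized vectors `C`-equivalent to the unit basis of `ℓ∞^k`. -/
def IsC0SeqWith (C : ℝ) (l : List X) : Prop :=
  (∀ x ∈ l, ‖x‖ = 1) ∧
  ∀ a : Fin l.length → ℝ,
    (∀ i, (1 / C) * |a i| ≤ ‖∑ j, a j • l.get j‖) ∧
    ∀ bd : ℝ, 0 ≤ bd → (∀ i, |a i| ≤ bd) → ‖∑ j, a j • l.get j‖ ≤ C * bd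

/-- An `ℓ1`-tree with constant `C`. -/
def IsL1Tree (C : ℝ) (T : Set (List X)) : Prop :=
  IsTree T ∧ ∀ l ∈ T, IsL1SeqWith C l

/-- A `c0`-tree with constant `C`. -/
def IsC0Tree (C : ℝ) (T : Set (List X)) : Prop :=
  IsTree T ∧ ∀ l ∈ T, IsC0SeqWith C l

/-- A block `ℓ1`-tree with constant `C`, all of whose entries lie in `Y`. -/
def IsBlockL1TreeIn (b : SchauderBasis X) (Y : Set X) (C : ℝ) (T : Set (List X)) : Prop :=
  IsL1Tree C T ∧ ∀ l ∈ T, (∀ x ∈ l, x ∈ Y ∧ b.IsBlockVector x) ∧ l.Chain' b.Before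

/-- The block Bourgain `ℓ1`-index: supremum of orders of well-founded block `ℓ1`-trees. -/
noncomputable def blockL1Index (b : SchauderBasis X) : Ordinal.{0} :=
  sSup {o | ∃ C : ℝ, 1 ≤ C ∧ ∃ T : Set (List X),
    IsBlockL1TreeIn b Set.univ C T ∧ IsWellFoundedTree T ∧ o = treeOrder T}

/-! ### Spreading models -/

/-- `(x_i)` generates an `ℓ1`-spreading model with constant `C` over the family `A`. -/
def GeneratesL1SM (x : ℕ → X) (C : ℝ) (A : Set (Finset ℕ)) : Prop :=
  ∀ F ∈ A, ∀ a : ℕ → ℝ,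
    (1 / C) * (∑ i ∈ F, |a i|) ≤ ‖∑ i ∈ F, a i • x i‖ ∧
    ‖∑ i ∈ F, a i • x i‖ ≤ C * ∑ i ∈ F, |a i|

/-- `(x_i)` generates a `c0`-spreading model with constant `C` over the family `A`. -/
def GeneratesC0SM (x : ℕ → X) (C : ℝ) (A : Set (Finset ℕ)) : Prop :=
  ∀ F ∈ A, ∀ a : ℕ → ℝ,
    (∀ i ∈ F, (1 / C) * |a i| ≤ ‖∑ j ∈ F, a j • x j‖) ∧
    ∀ bd : ℝ, 0 ≤ bd → (∀ i ∈ F, |a i| ≤ bd) → ‖∑ j ∈ F, a j • x j‖ ≤ C * bd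

/-- `(x_i)` generates an `ℓp`-spreading model with constant `C` over the family `A`. -/
def GeneratesLpSM (p : ℝ) (x : ℕ → X) (C : ℝ) (A : Set (Finset ℕ)) : Prop :=
  ∀ F ∈ A, ∀ a : ℕ → ℝ,
    (1 / C) * (∑ i ∈ F, |a i| ^ p) ^ (1 / p) ≤ ‖∑ i ∈ F, a i • x i‖ ∧
    ‖∑ i ∈ F, a i • x i‖ ≤ C * (∑ i ∈ F, |a i| ^ p) ^ (1 / p)

/-- A basic sequence (with some basis constant `K`). -/
def IsBasicSeq (x : ℕ → X) : Prop :=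
  ∃ K : ℝ, 1 ≤ K ∧ ∀ (a : ℕ → ℝ) (n m : ℕ), n ≤ m →
    ‖∑ i ∈ Finset.range n, a i • x i‖ ≤ K * ‖∑ i ∈ Finset.range m, a i • x i‖

/-! ### The Schreier games -/

/-- Validity of the responses of player V: normalized successive block vectors. -/
def ValidResponses (b : SchauderBasis X) (resp : ℕ → X) : Prop :=
  (∀ i, ‖resp i‖ = 1 ∧ b.IsBlockVector (resp i)) ∧ ∀ i, b.Before (resp i) (resp (i + 1))

/-- Player V has a winning strategy, with constant `C`, in the `S`-game played inside `Y`,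
where player S chooses block subspaces (given by block sequences with entries in `Y`)
and V answers with normalized block vectors of the subspace chosen by S;
V wins when the responses form a maximal `S`-admissible sequence `C`-equivalent to
the unit basis of `ℓ1^k`. -/
def VWinsBlockGameIn (b : SchauderBasis X) (Y : Set X) (Sfam : Set (Finset ℕ)) (C : ℝ) :
    Prop :=
  ∃ strat : List (ℕ → X) → X,
    ∀ moves : ℕ → ℕ → X,
      (∀ i, b.IsBlockSeq (moves i) ∧ ∀ n, moves i n ∈ Y) →
      (ValidResponses b (fun i => strat (List.ofFn fun j : Fin (i + 1) => moves j.1)) ∧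
       (∀ i, strat (List.ofFn fun j : Fin (i + 1) => moves j.1) ∈
          closure (Submodule.span ℝ (Set.range (moves i)) : Set X)) ∧
       ∃ k : ℕ,
         IsMaximalIn Sfam
           (Finset.image
             (fun i : Fin (k + 1) =>
               b.minSupp (strat (List.ofFn fun j : Fin (i.1 + 1) => moves j.1)))
             Finset.univ) ∧
         IsL1SeqWith C (List.ofFn fun i : Fin (k + 1) =>
           strat (List.ofFn fun j : Fin (i.1 + 1) => moves j.1)))

/-- The tail-subspace version of the game: player S only chooses tail subspaces. -/
def VWinsTailGame (b : SchauderBasis X) (Sfam : Set (Finset ℕ)) (C : ℝ) : Prop :=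
  ∃ strat : List ℕ → X,
    ∀ moves : ℕ → ℕ,
      (ValidResponses b (fun i => strat (List.ofFn fun j : Fin (i + 1) => moves j.1)) ∧
       (∀ i, ∀ n ∈ b.suppSet (strat (List.ofFn fun j : Fin (i + 1) => moves j.1)),
          moves i ≤ n) ∧
       ∃ k : ℕ,
         IsMaximalIn Sfam
           (Finset.image
             (fun i : Fin (k + 1) =>
               b.minSupp (strat (List.ofFn fun j : Fin (i.1 + 1) => moves j.1)))
             Finset.univ) ∧
         IsL1SeqWith C (List.ofFn fun i : Fin (k + 1) =>
           strat (List.ofFn fun j : Fin (i.1 + 1) => moves j.1)))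


/-! ### `c00` machinery -/

/-- Finitely supported real sequences (`c00`), used both for vectors and functionals. -/
abbrev Func := ℕ →₀ ℝ

/-- Action of a functional `φ` on a vector `x`. -/
def dot (φ x : Func) : ℝ := φ.sum fun n a => a * x n

/-- The norm induced on `c00` by a norming set `G`. -/
noncomputable def gNorm (G : Set Func) (x : Func) : ℝ := sSup ((fun φ => dot φ x) '' G)

/-- Successive supports. -/
def SuccSupp (f g : Func) : Prop := ∀ a ∈ f.support, ∀ b ∈ g.support, a < b

/-- Restriction of a functional to a set (used with intervals) of coordinates. -/
noncomputable def restrictTo (E : Set ℕ) (g : Func) : Func :=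
  haveI := Classical.decPred fun n => n ∈ E
  g.filter fun n => n ∈ E

/-- All coordinates rational. -/
def RationalCoeffs (g : Func) : Prop := ∀ n, ∃ q : ℚ, g n = (q : ℝ)

/-- `min supp g`. -/
def minsupp (g : Func) : ℕ := sInf {n | g n ≠ 0}

/-- `max supp g`. -/
def maxsupp (g : Func) : ℕ := g.support.sup id

/-- The sequence `m_j` : `m_1 = 2^5`, `m_{j+1} = m_j^5`. -/
def mseq (j : ℕ) : ℕ := 2 ^ 5 ^ j

/-- The sequence `n_j` : `n_1 = 2^6`, `n_{j+1} = (2 n_j)^{s_j}` where `2^{s_j} = m_{j+1}^3`. -/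
def nseq : ℕ → ℕ
  | 0 => 1
  | 1 => 2 ^ 6
  | (j + 2) => (2 * nseq (j + 1)) ^ (3 * 5 ^ (j + 2))

/-! ### The ground set `G_ξ` -/

/-- `G_0 = {± e_n^*}`. -/
def G0 : Set Func := {φ | ∃ n : ℕ, φ = Finsupp.single n 1 ∨ φ = -Finsupp.single n 1}

/-- `G_1^j`: functionals `m_{2j-1}^{-2} Σ_{k ∈ B} ± e_k^*` with `#B ≤ n_{2j-1}`. -/
def G1set (j : ℕ) : Set Func :=
  {φ | ∃ (B : Finset ℕ) (ε : ℕ → ℝ), B.card ≤ nseq (2 * j - 1) ∧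
    (∀ k, ε k = 1 ∨ ε k = -1) ∧
    φ = ((mseq (2 * j - 1) : ℝ) ^ 2)⁻¹ • ∑ k ∈ B, ε k • Finsupp.single k 1}

/-- `G_1 = ∪_j G_1^j`. -/
def G1all : Set Func := {φ | ∃ j : ℕ, 1 ≤ j ∧ φ ∈ G1set j}

/-- The domain `𝒰` of the coding function `σ₁`. -/
def InU (l : List Func) : Prop :=
  ∃ (d : ℕ) (f : Fin d → Func) (j : Fin d → ℕ),
    l = List.ofFn f ∧ StrictMono j ∧ (∀ i, 1 ≤ j i ∧ f i ∈ G1set (j i)) ∧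
    ∀ i₁ i₂ : Fin d, i₁ < i₂ → SuccSupp (f i₁) (f i₂)

/-- The data used to define `G_ξ`: the partition `ℕ = M₁ ∪ M₂` and the coding `σ₁`. -/
structure CodingOne where
  M₁ : Set ℕ
  M₂ : Set ℕ
  disj : Disjoint M₁ M₂
  union : M₁ ∪ M₂ = Set.univ
  inf₁ : M₁.Infinite
  inf₂ : M₂.Infinite
  σ₁ : List Func → ℕ
  mem_M₂ : ∀ l, InU l → σ₁ l ∈ M₂
  inj : ∀ l l', InU l → InU l' → σ₁ l = σ₁ l' → l = l'
  mono : ∀ l f, InU (l ++ [f]) → σ₁ l < σ₁ (l ++ [f])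

/-- A `σ₁`-special sequence `(f_1, …, f_d)` with index sequence `j`. -/
def IsSpecialSeq (Sch : SchreierSystem) (ξ : Ordinal.{0}) (cd : CodingOne)
    (d : ℕ) (f : Fin d → Func) (j : Fin d → ℕ) : Prop :=
  StrictMono j ∧
  (∀ i, 1 ≤ j i ∧ f i ∈ G1set (j i) ∧ (f i).support.Nonempty) ∧
  (∀ i₁ i₂ : Fin d, i₁ < i₂ → SuccSupp (f i₁) (f i₂)) ∧
  Finset.image (fun i => minsupp (f i)) Finset.univ ∈ Sch.S ξ ∧
  (∀ h : 0 < d, j ⟨0, h⟩ ∈ cd.M₁) ∧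
  ∀ (i : ℕ) (h : i + 1 < d),
    j ⟨i + 1, h⟩ = cd.σ₁ (List.ofFn fun t : Fin (i + 1) => f ⟨t.1, lt_trans t.2 h⟩)

/-- Elements of `G_sp` together with their index set. -/
def GspInd (Sch : SchreierSystem) (ξ : Ordinal.{0}) (cd : CodingOne)
    (φ : Func) (I : Set ℕ) : Prop :=
  ∃ (d : ℕ) (f : Fin d → Func) (j : Fin d → ℕ) (ε : Fin d → ℝ) (E : Set ℕ),
    IsSpecialSeq Sch ξ cd d f j ∧ (∀ i, ε i = 1 ∨ ε i = -1) ∧ E.OrdConnected ∧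
    φ = ∑ i, restrictTo E (ε i • f i) ∧
    I = {m | ∃ i, j i = m ∧ restrictTo E (f i) ≠ 0}

/-- `G_sp`: the `G_ξ`-special functionals. -/
def Gsp (Sch : SchreierSystem) (ξ : Ordinal.{0}) (cd : CodingOne) : Set Func :=
  {φ | ∃ I, GspInd Sch ξ cd φ I}

/-- A member of `G_sp ∪ G_1` together with its index set. -/
def WeightedInd (Sch : SchreierSystem) (ξ : Ordinal.{0}) (cd : CodingOne)
    (φ : Func) (I : Set ℕ) : Prop :=
  (∃ j : ℕ, 1 ≤ j ∧ φ ∈ G1set j ∧ I = {j}) ∨ GspInd Sch ξ cd φ I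

/-- `G_{ℓ2}`: `ℓ2`-convex combinations of elements of `G_sp ∪ G_1` with pairwise
disjoint index sets. -/
def Gl2 (Sch : SchreierSystem) (ξ : Ordinal.{0}) (cd : CodingOne) : Set Func :=
  {φ | ∃ (d : ℕ) (ψ : Fin d → Func) (I : Fin d → Set ℕ) (a : Fin d → ℝ),
    (∑ i, a i ^ 2) ≤ 1 ∧ (∀ i, WeightedInd Sch ξ cd (ψ i) (I i)) ∧
    (∀ i₁ i₂ : Fin d, i₁ ≠ i₂ → Disjoint (I i₁) (I i₂)) ∧
    φ = ∑ i, a i • ψ i}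

/-- The ground set `G_ξ = G_0 ∪ G_1 ∪ G_sp ∪ G_{ℓ2}`. -/
def Gxi (Sch : SchreierSystem) (ξ : Ordinal.{0}) (cd : CodingOne) : Set Func :=
  G0 ∪ G1all ∪ Gsp Sch ξ cd ∪ Gl2 Sch ξ cd

/-- The set `G'_ξ = G_0 ∪ G_1 ∪ G_sp ∪ {0}`. -/
def Gxi' (Sch : SchreierSystem) (ξ : Ordinal.{0}) (cd : CodingOne) : Set Func :=
  G0 ∪ G1all ∪ Gsp Sch ξ cd ∪ {0}

/-! ### Completions -/

/-- `T` realizes the Banach space `X` as the completion of `c00` under the norm `Nrm`. -/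
def IsCompletionOf (Nrm : Func → ℝ) (X : Type) [NormedAddCommGroup X] [NormedSpace ℝ X]
    (T : Func →ₗ[ℝ] X) : Prop :=
  (∀ v : Func, ‖T v‖ = Nrm v) ∧ DenseRange T

/-- Bundled version of a completion of `(c00, Nrm)`. -/
structure CompletionOf (Nrm : Func → ℝ) where
  carrier : Type
  [grp : NormedAddCommGroup carrier]
  [mod : NormedSpace ℝ carrier]
  [cpl : CompleteSpace carrier]
  T : Func →ₗ[ℝ] carrier
  isom : ∀ v, ‖T v‖ = Nrm v
  dense : DenseRange T

/-! ### The norming set `K_ξ` of the space `X_ξ` -/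

/-- Finite block sequences of nonzero rational functionals (the domain `ℚ_s` of `σ`). -/
def IsRatBlock (l : List Func) : Prop :=
  (∀ g ∈ l, g ≠ 0 ∧ RationalCoeffs g) ∧ l.Chain' SuccSupp

/-- The data for `K_ξ`: a partition `(Λ_i)` of `ℕ` into infinite sets, a partition
`ℕ = N₁ ∪ N₂` and the coding function `σ` with its growth property. -/
structure CodingTwo where
  Λ : ℕ → Set ℕ
  Λdisj : ∀ i j, i ≠ j → Disjoint (Λ i) (Λ j)
  Λinf : ∀ i, (Λ i).Infinite
  Λcover : (⋃ i, Λ i) = Set.univ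
  N₁ : Set ℕ
  N₂ : Set ℕ
  Ndisj : Disjoint N₁ N₂
  Nunion : N₁ ∪ N₂ = Set.univ
  σ : List Func → ℕ
  σ_mem : ∀ l, IsRatBlock l → σ l ∈ N₂
  σ_inj : ∀ l l', IsRatBlock l → IsRatBlock l' → σ l = σ l' → l = l'
  σ_growth : ∀ l, IsRatBlock l → ∀ g ∈ l, ∀ t ∈ g.support, ∀ gl, l.getLast? = some gl →
    (maxsupp gl : ℝ) * |g t|⁻¹ < Real.sqrt (mseq (2 * σ l))

/-- `g` is the result of an `(A_N, θ)`-operation on functionals from `W`. -/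
def IsAOp (W : Set Func) (N : ℕ) (θ : ℝ) (g : Func) : Prop :=
  ∃ (d : ℕ) (f : Fin d → Func), 0 < d ∧ d ≤ N ∧ (∀ i, f i ∈ W) ∧
    (∀ i₁ i₂ : Fin d, i₁ < i₂ → SuccSupp (f i₁) (f i₂)) ∧ g = θ • ∑ i, f i

/-- An `n_{2j-1}`-attractor sequence relative to the set `W`. -/
def IsAttractorSeq (cd₂ : CodingTwo) (W : Set Func) (j d : ℕ) (f : Fin d → Func) : Prop :=
  1 ≤ j ∧ d ≤ nseq (2 * j - 1) ∧ (∀ i, f i ∈ W) ∧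
  (∀ i, f i ≠ 0 ∧ RationalCoeffs (f i)) ∧
  (∀ i₁ i₂ : Fin d, i₁ < i₂ → SuccSupp (f i₁) (f i₂)) ∧
  (∀ h : 0 < d, ∃ j₁ : ℕ, j₁ ∈ cd₂.N₁ ∧ nseq (2 * j - 1) ^ 3 < mseq (2 * j₁) ∧
    IsAOp W (nseq (2 * j₁)) ((mseq (2 * j₁) : ℝ))⁻¹ (f ⟨0, h⟩)) ∧
  (∀ (k : ℕ) (h : 2 * k < d), 0 < k →
    IsAOp W (nseq (2 * cd₂.σ (List.ofFn fun t : Fin (2 * k) => f ⟨t.1, lt_trans t.2 h⟩)))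
      ((mseq (2 * cd₂.σ (List.ofFn fun t : Fin (2 * k) => f ⟨t.1, lt_trans t.2 h⟩)) : ℝ))⁻¹
      (f ⟨2 * k, h⟩)) ∧
  (∀ (k : ℕ) (h : 2 * k + 1 < d), ∃ lam : ℕ,
    lam ∈ cd₂.Λ (cd₂.σ (List.ofFn fun t : Fin (2 * k + 1) => f ⟨t.1, lt_trans t.2 h⟩)) ∧
    f ⟨2 * k + 1, h⟩ = Finsupp.single lam 1)

/-- Symmetric set of functionals. -/
def SymmClosed (W : Set Func) : Prop := ∀ f ∈ W, -f ∈ W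

/-- Closed under restrictions to intervals. -/
def IntervalClosed (W : Set Func) : Prop :=
  ∀ f ∈ W, ∀ E : Set ℕ, E.OrdConnected → restrictTo E f ∈ W

/-- Rationally convex. -/
def RatConvex (W : Set Func) : Prop :=
  ∀ (d : ℕ) (g : Fin d → Func) (r : Fin d → ℚ), (∀ i, g i ∈ W) → (∀ i, 0 ≤ r i) →
    (∑ i, r i) = 1 → (∑ i, (r i : ℝ) • g i) ∈ W

/-- Closed under rational `ℓ2`-convex combinations of weighted functionals
(results of `(A_{n_{j_i}}, m_{j_i}^{-1})`-operations with pairwise distinct `n_{j_i}`). -/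
def L2ComboClosed (W : Set Func) : Prop :=
  ∀ (d : ℕ) (g : Fin d → Func) (jj : Fin d → ℕ) (lam : Fin d → ℚ),
    (∀ i, g i ∈ W ∧ IsAOp W (nseq (jj i)) ((mseq (jj i) : ℝ))⁻¹ (g i)) →
    (∀ i₁ i₂ : Fin d, i₁ ≠ i₂ → nseq (jj i₁) ≠ nseq (jj i₂)) →
    (∑ i, (lam i : ℝ) ^ 2) ≤ 1 → (∑ i, (lam i : ℝ) • g i) ∈ W

/-- The closure properties defining `K_ξ`. -/
def KClosed (Sch : SchreierSystem) (ξ : Ordinal.{0}) (cd₁ : CodingOne) (cd₂ : CodingTwo)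
    (W : Set Func) : Prop :=
  Gxi Sch ξ cd₁ ⊆ W ∧ SymmClosed W ∧ IntervalClosed W ∧
  (∀ j : ℕ, 1 ≤ j → ∀ g, IsAOp W (nseq (2 * j)) ((mseq (2 * j) : ℝ))⁻¹ g → g ∈ W) ∧
  (∀ (j d : ℕ) (f : Fin d → Func), IsAttractorSeq cd₂ W j d f →
    (((mseq (2 * j - 1) : ℝ))⁻¹ • ∑ i, f i) ∈ W) ∧
  L2ComboClosed W ∧ RatConvex W

/-- The norming set `K_ξ` : the minimal subset of `c00` with the above closure properties. -/
def Kxi (Sch : SchreierSystem) (ξ : Ordinal.{0}) (cd₁ : CodingOne) (cd₂ : CodingTwo) :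
    Set Func :=
  ⋂₀ {W | KClosed Sch ξ cd₁ cd₂ W}

/-! ### General ground sets and mixed Tsirelson extensions -/

/-- A ground set. -/
def IsGroundSet (G : Set Func) : Prop :=
  SymmClosed G ∧ (∀ n : ℕ, Finsupp.single n 1 ∈ G) ∧
  (∀ f ∈ G, (∀ n, |f n| ≤ 1) ∧ RationalCoeffs f) ∧ IntervalClosed G

/-- The closure properties defining `W_G`. -/
def WClosed (G : Set Func) (W : Set Func) : Prop :=
  G ⊆ W ∧ SymmClosed W ∧ IntervalClosed W ∧
  (∀ j : ℕ, 1 ≤ j → ∀ g, IsAOp W (nseq j) ((mseq j : ℝ))⁻¹ g → g ∈ W) ∧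
  L2ComboClosed W ∧ RatConvex W

/-- `W_G`: the smallest subset of `c00` with the above closure properties. -/
def WGset (G : Set Func) : Set Func := ⋂₀ {W | WClosed G W}

/-- An extension `D_G ⊆ W_G` of the ground set `G`. -/
def IsExtension (G D : Set Func) : Prop :=
  D ⊆ WGset G ∧ G ⊆ D ∧ SymmClosed D ∧ IntervalClosed D ∧
  (∀ j : ℕ, 1 ≤ j → ∀ g, IsAOp D (nseq (2 * j)) ((mseq (2 * j) : ℝ))⁻¹ g → g ∈ D) ∧
  L2ComboClosed D ∧ RatConvex D

/-! ### Shrinking and boundedly complete bases -/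

variable {X : Type} [NormedAddCommGroup X] [NormedSpace ℝ X]

/-- A Schauder basis is shrinking: the norms of the restrictions of any functional to the
tail subspaces tend to `0`. -/
def SchauderBasis.Shrinking (b : SchauderBasis X) : Prop :=
  ∀ f : X →L[ℝ] ℝ,
    Tendsto (fun n => sSup {r : ℝ |
        ∃ x ∈ closure (Submodule.span ℝ (b.e '' {m | n ≤ m}) : Set X), ‖x‖ ≤ 1 ∧ r = |f x|})
      atTop (𝓝 0)

/-- A Schauder basis is boundedly complete: bounded partial sums converge. -/
def SchauderBasis.BoundedlyComplete (b : SchauderBasis X) : Prop :=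
  ∀ a : ℕ → ℝ, (∃ M : ℝ, ∀ n, ‖∑ i ∈ Finset.range n, a i • b.e i‖ ≤ M) →
    ∃ x : X, Tendsto (fun n => ∑ i ∈ Finset.range n, a i • b.e i) atTop (𝓝 x)

/-! ### The space `(⊕_n ℓ1^n)_{ℓ2}` -/

instance : Fact ((1 : ENNReal) ≤ 2) := ⟨by norm_num⟩

/-- The `ℓ2`-direct sum of the spaces `ℓ1^n`, `n ≥ 1`. -/
abbrev X4 : Type := lp (fun n : ℕ => PiLp 1 fun _ : Fin (n + 1) => ℝ) 2

/-- The `j`-th unit vector of `ℓ1^{n+1}`. -/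
noncomputable def unitVec (n : ℕ) (j : Fin (n + 1)) : PiLp 1 fun _ : Fin (n + 1) => ℝ :=
  (WithLp.equiv 1 (∀ _ : Fin (n + 1), ℝ)).symm (Pi.single j 1)

/-- The canonical basis vectors of `(⊕_n ℓ1^n)_{ℓ2}`. -/
noncomputable def basisVec (q : Σ n : ℕ, Fin (n + 1)) : X4 :=
  lp.single 2 q.1 (unitVec q.1 q.2)

/-- The (strict) lexicographic order on the index set `Σ n, Fin (n+1)`. -/
def SigmaLexLt (q q' : Σ n : ℕ, Fin (n + 1)) : Prop :=
  q.1 < q'.1 ∨ (q.1 = q'.1 ∧ q.2.1 < q'.2.1)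

/-! ### Bundled Banach spaces -/

/-- A Banach space together with a Schauder basis. -/
structure BanachWithBasis where
  carrier : Type
  [grp : NormedAddCommGroup carrier]
  [mod : NormedSpace ℝ carrier]
  [cpl : CompleteSpace carrier]
  basis : SchauderBasis carrier

/-- A bundled Banach space. -/
structure BanachSpaceObj where
  carrier : Type
  [grp : NormedAddCommGroup carrier]
  [mod : NormedSpace ℝ carrier]
  [cpl : CompleteSpace carrier]

/-! The map `r ↦ r.map f` sends `D^o(R)` into `D^o(F)`, where `F` is the image tree: an
extension `r ++ [x]` of `r` is mapped to the extension `r.map f ++ [f x]`. A well-founded tree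
`F` has `D^o(F) = ∅` for some `o`, as the derivatives must stabilize and a nonempty stable
derivative contains an infinite branch. Hence `D^{o(F)}(R) = ∅`. -/

section TreeDerivatives

variable {α β : Type}

theorem derivIter_eq (T : Set (List α)) (o : Ordinal.{0}) :
    derivIter T o =
      if o = 0 then T else ⋂ p : {γ : Ordinal.{0} // γ < o}, treeDeriv (derivIter T p.1) := by
  rw [derivIter, WellFounded.fix_eq]

@[simp]
theorem derivIter_zero (T : Set (List α)) : derivIter T 0 = T := by
  simp [derivIter_eq T 0]

theorem derivIter_of_ne_zero (T : Set (List α)) {o : Ordinal.{0}} (ho : o ≠ 0) :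
    derivIter T o = ⋂ p : {γ : Ordinal.{0} // γ < o}, treeDeriv (derivIter T p.1) := by
  simp [derivIter_eq T o, ho]

theorem treeDeriv_subset (T : Set (List α)) : treeDeriv T ⊆ T := fun _ h => h.1

theorem treeDeriv_mono {S T : Set (List α)} (h : S ⊆ T) : treeDeriv S ⊆ treeDeriv T :=
  fun _ hl => ⟨h hl.1, hl.2.imp fun _ hx => h hx⟩

theorem derivIter_antitone (T : Set (List α)) : Antitone (derivIter T) := by
  intro γ o h
  rcases h.eq_or_lt with rfl | h
  · exact subset_rfl
  · rw [derivIter_of_ne_zero T h.ne_bot]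
    exact (Set.iInter_subset _ ⟨γ, h⟩).trans (treeDeriv_subset _)

theorem derivIter_add_one (T : Set (List α)) (o : Ordinal.{0}) :
    derivIter T (o + 1) = treeDeriv (derivIter T o) := by
  rw [derivIter_of_ne_zero T (by exact (Order.succ_ne_bot o : o + 1 ≠ 0))]
  refine subset_antisymm ?_ ?_
  · exact Set.iInter_subset_of_subset ⟨o, Order.lt_succ o⟩ subset_rfl
  · exact Set.subset_iInter fun p =>
      treeDeriv_mono (derivIter_antitone T (Order.le_of_lt_succ p.2))

theorem exists_derivIter_add_one_eq (T : Set (List α)) :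
    ∃ o : Ordinal.{0}, derivIter T (o + 1) = derivIter T o := by
  by_contra! hne
  refine not_injective_of_ordinal (derivIter T) (StrictAnti.injective fun γ o hlt => ?_)
  have hsub : derivIter T (γ + 1) ⊆ derivIter T γ := by
    rw [derivIter_add_one]; exact treeDeriv_subset _
  exact ((derivIter_antitone T (Order.add_one_le_of_lt hlt)).trans_ssubset
    (hsub.ssubset_of_ne (hne γ)))

theorem map_mem_derivIter (f : α → β) (R : Set (List α)) (o : Ordinal.{0}) :
    ∀ l ∈ derivIter R o, l.map f ∈ derivIter {l | ∃ r ∈ R, l = r.map f} o := by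
  induction o using WellFoundedLT.induction with
  | ind o ih =>
    intro l hl
    rcases eq_or_ne o 0 with rfl | ho
    · rw [derivIter_zero] at hl ⊢
      exact ⟨l, hl, rfl⟩
    · rw [derivIter_of_ne_zero _ ho] at hl ⊢
      refine Set.mem_iInter.2 fun p => ?_
      obtain ⟨hl', x, hx⟩ := Set.mem_iInter.1 hl p
      exact ⟨ih p.1 p.2 l hl', f x, by simpa using ih p.1 p.2 _ hx⟩

theorem IsTree.map {R : Set (List α)} (hR : IsTree R) (f : α → β) :
    IsTree {l | ∃ r ∈ R, l = r.map f} := by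
  rintro _ ⟨r, hr, rfl⟩ l' hpre hne
  obtain ⟨r', hr'r, rfl⟩ := List.prefix_map_iff.1 hpre
  exact ⟨r', hR r hr r' hr'r (by simpa using hne), rfl⟩

theorem not_isWellFoundedTree_of_extendable {T S : Set (List α)} (hT : IsTree T)
    (hST : S ⊆ T) (hS : ∀ l ∈ S, ∃ x : α, l ++ [x] ∈ S) (hne : S.Nonempty) :
    ¬ IsWellFoundedTree T := by
  choose next hnext using hS
  obtain ⟨l₀, hl₀⟩ := hne
  let c : ℕ → S := fun n =>
    Nat.rec ⟨l₀, hl₀⟩ (fun _ l => ⟨l.1 ++ [next l.1 l.2], hnext l.1 l.2⟩) n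
  have hc_succ : ∀ n, (c (n + 1)).1 = (c n).1 ++ [next _ (c n).2] := fun _ => rfl
  have hlen : ∀ n, (c n).1.length = l₀.length + n := by
    intro n
    induction n with
    | zero => rfl
    | succ n ih => rw [hc_succ, List.length_append, ih, List.length_singleton, add_assoc]
  have hpre : ∀ m n, m ≤ n → (c m).1 <+: (c n).1 := by
    intro m n hmn
    induction n, hmn using Nat.le_induction with
    | base => exact List.prefix_rfl
    | succ n _ ih => exact ih.trans (hc_succ n ▸ List.prefix_append _ _)
  intro hwf
  obtain ⟨k, hk⟩ := hwf fun i => (c (i + 1)).1[i]'(by have := hlen (i + 1); omega)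
  refine hk (hT _ (hST (c (k + 1)).2) _ ?_ (by simp))
  refine List.prefix_iff_getElem.2 ⟨by simp [hlen], fun i hi => ?_⟩
  rw [List.length_ofFn] at hi
  rw [List.getElem_ofFn]
  exact (hpre (i + 1) (k + 1) (by omega)).getElem _

theorem IsWellFoundedTree.exists_derivIter_eq_empty {T : Set (List α)}
    (hwf : IsWellFoundedTree T) (hT : IsTree T) : ∃ o : Ordinal.{0}, derivIter T o = ∅ := by
  obtain ⟨o, ho⟩ := exists_derivIter_add_one_eq T
  refine ⟨o, Set.not_nonempty_iff_eq_empty.1 fun hne => ?_⟩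
  refine not_isWellFoundedTree_of_extendable hT
    (by simpa using derivIter_antitone T (zero_le (a := o))) (fun l hl => ?_) hne hwf
  rw [← ho, derivIter_add_one] at hl
  exact hl.2

theorem treeOrder_le_treeOrder_map {R : Set (List α)} (hR : IsTree R) (f : α → β)
    (hwf : IsWellFoundedTree {l | ∃ r ∈ R, l = r.map f}) :
    treeOrder R ≤ treeOrder {l | ∃ r ∈ R, l = r.map f} := by
  set F := {l | ∃ r ∈ R, l = r.map f}
  have hF : derivIter F (treeOrder F) = ∅ := csInf_mem (hwf.exists_derivIter_eq_empty (hR.map f))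
  refine csInf_le' (Set.eq_empty_of_forall_notMem fun l hl => ?_)
  exact hF.subset (map_mem_derivIter f R _ l hl)

end TreeDerivatives

theorem statement_3_general (X : Type) [NormedAddCommGroup X] [NormedSpace ℝ X]
    (b : SchauderBasis X) (R : Set (List X)) (hR : IsTree R)
    (hFwf : IsWellFoundedTree {l : List ℕ | ∃ r ∈ R, l = r.map b.minSupp}) :
    treeOrder R ≤ treeOrder {l : List ℕ | ∃ r ∈ R, l = r.map b.minSupp} :=
  treeOrder_le_treeOrder_map hR b.minSupp hFwf

/-- For a tree `R` of finite block sequences with both `R` and the associated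
tree `F_R` of min-support sequences well founded, `o(R) ≤ o(F_R)`. -/
theorem statement_3 (X : Type) [NormedAddCommGroup X] [NormedSpace ℝ X]
    (b : SchauderBasis X) (R : Set (List X)) (hR : IsTree R)
    (hblock : ∀ l ∈ R, l.Chain' b.Before ∧ ∀ x ∈ l, b.IsBlockVector x)
    (hRwf : IsWellFoundedTree R)
    (hFwf : IsWellFoundedTree {l : List ℕ | ∃ r ∈ R, l = r.map b.minSupp}) :
    treeOrder R ≤ treeOrder {l : List ℕ | ∃ r ∈ R, l = r.map b.minSupp} :=
  statement_3_general X b R hR hFwf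

end HerL1
end
end

section
/- For every block sequence (y_ℓ) in X_ξ, every ε > 0 and every k ≥ m_2, there exists x in the closed linear span of (y_ℓ) which is a normalized 2-ℓ1^k average, i.e. x = (1/k)(x_1 + … + x_k) with x_1 < … < x_k successive blocks, ||x_i|| ≤ 2 for all i and ||x|| = 1. In particular, for every k ∈ ℕ there exists n ∈ ℕ such that for every finite block subsequence (y_{ℓ_i})_{i=1}^n there is a normalized block sequence (z_i)_{i=1}^k of it with ||z_1 + … + z_k|| ≥ k/2. -/
noncomputable section

open Filter Topology

namespace HerL1

variable {X : Type} [NormedAddCommGroup X] [NormedSpace ℝ X]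

/-! ### Shrinking and boundedly complete bases -/

variable {X : Type} [NormedAddCommGroup X] [NormedSpace ℝ X]

/-!
If a block subspace contains no `3/4`-`ℓ₁^k` block sequence, grouping shows that every sum of
`k^s` successive normalized blocks has norm at most `((3/4) k)^s`. On the other hand `K_ξ` is
closed under the `(A_{n_{2j}}, m_{2j}^{-1})`-operations, so `‖u₁ + ⋯ + u_d‖ ≥ m_{2j}^{-1} Σ ‖uᵢ‖`
for successive `d ≤ n_{2j}`. For `k ≤ n_{2j-1}` and `s = 3·5^{2j}` we have `k^s ≤ n_{2j}` and
`(3/4)^s < m_{2j}^{-1}`, a contradiction. A `3/4`-`ℓ₁^k` block sequence rescales to a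
`2`-`ℓ₁^k` average; and a norming functional of a `3/4`-`ℓ₁^{2k+1}` sum exceeds `1/2` on more
than `k` of the normalized blocks.

The norm is finite because every functional in `K_ξ` has coordinates bounded by `1`: in the
`ℓ₂`-combinations the weights hitting a coordinate are distinct, and `Σ_j 2^{-(j+1)} ≤ 1`.
-/

open Finset

lemma dot_eq_sum_of_support_subset (φ x : Func) {s : Finset ℕ} (h : φ.support ⊆ s) :
    dot φ x = ∑ n ∈ s, φ n * x n :=
  Finsupp.sum_of_support_subset φ h _ fun _ _ => zero_mul _

lemma dot_add_left (φ ψ x : Func) : dot (φ + ψ) x = dot φ x + dot ψ x :=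
  Finsupp.sum_add_index' (fun _ => zero_mul _) fun _ _ _ => add_mul _ _ _

lemma dot_smul_left (c : ℝ) (φ x : Func) : dot (c • φ) x = c * dot φ x := by
  rw [dot, Finsupp.sum_smul_index' fun _ => zero_mul _, dot, Finsupp.mul_sum]
  simp only [smul_eq_mul, mul_assoc]

lemma dot_add_right (φ x y : Func) : dot φ (x + y) = dot φ x + dot φ y := by
  simp only [dot, Finsupp.add_apply, mul_add, Finsupp.sum_add]

lemma dot_smul_right (c : ℝ) (φ x : Func) : dot φ (c • x) = c * dot φ x := by
  simp only [dot, Finsupp.smul_apply, smul_eq_mul, Finsupp.mul_sum, mul_left_comm]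

def dotBilin : Func →ₗ[ℝ] Func →ₗ[ℝ] ℝ :=
  LinearMap.mk₂ ℝ dot dot_add_left dot_smul_left dot_add_right dot_smul_right

lemma dot_sum_left {ι : Type*} (s : Finset ι) (φ : ι → Func) (x : Func) :
    dot (∑ i ∈ s, φ i) x = ∑ i ∈ s, dot (φ i) x := by
  show dotBilin _ x = _
  rw [map_sum, LinearMap.sum_apply]
  rfl

lemma dot_sum_right (φ : Func) {ι : Type*} (s : Finset ι) (x : ι → Func) :
    dot φ (∑ i ∈ s, x i) = ∑ i ∈ s, dot φ (x i) :=
  map_sum (dotBilin φ) x s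

lemma dot_neg_left (φ x : Func) : dot (-φ) x = -dot φ x := by
  simpa using dot_smul_left (-1) φ x

lemma dot_single_left (n : ℕ) (x : Func) : dot (Finsupp.single n 1) x = x n := by
  simp [dot]

lemma dot_eq_sum_support_right (φ x : Func) : dot φ x = ∑ n ∈ x.support, φ n * x n := by
  rw [dot_eq_sum_of_support_subset φ x subset_union_left]
  exact (sum_subset subset_union_right fun n _ hn => by
    rw [Finsupp.notMem_support_iff.mp hn, mul_zero]).symm

lemma abs_dot_le {φ : Func} (hφ : ∀ n, |φ n| ≤ 1) (x : Func) :
    |dot φ x| ≤ ∑ n ∈ x.support, |x n| := by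
  rw [dot_eq_sum_support_right]
  refine (abs_sum_le_sum_abs _ _).trans (sum_le_sum fun n _ => ?_)
  rw [abs_mul]
  exact mul_le_of_le_one_left (abs_nonneg _) (hφ n)

lemma restrictTo_apply_of_mem {E : Set ℕ} {n : ℕ} (g : Func) (h : n ∈ E) :
    restrictTo E g n = g n := by
  rw [restrictTo, Finsupp.filter_apply, if_pos h]

lemma restrictTo_apply_of_not_mem {E : Set ℕ} {n : ℕ} (g : Func) (h : n ∉ E) :
    restrictTo E g n = 0 := by
  rw [restrictTo, Finsupp.filter_apply, if_neg h]

lemma mem_of_mem_support_restrictTo {E : Set ℕ} {g : Func} {n : ℕ}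
    (hn : n ∈ (restrictTo E g).support) : n ∈ E := by
  by_contra h
  exact Finsupp.mem_support_iff.mp hn (restrictTo_apply_of_not_mem g h)

lemma support_restrictTo_subset (E : Set ℕ) (g : Func) : (restrictTo E g).support ⊆ g.support :=
  fun n hn => Finsupp.mem_support_iff.mpr fun h0 => Finsupp.mem_support_iff.mp hn <| by
    by_cases h : n ∈ E
    · rw [restrictTo_apply_of_mem g h, h0]
    · exact restrictTo_apply_of_not_mem g h

lemma dot_restrictTo_of_support_subset {E : Set ℕ} (φ : Func) {x : Func}
    (h : ↑x.support ⊆ E) : dot (restrictTo E φ) x = dot φ x := by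
  simp only [dot_eq_sum_support_right]
  exact sum_congr rfl fun n hn => by rw [restrictTo_apply_of_mem φ (h hn)]

lemma dot_restrictTo_of_disjoint {E : Set ℕ} (φ : Func) {x : Func}
    (h : Disjoint (↑x.support) E) : dot (restrictTo E φ) x = 0 := by
  rw [dot_eq_sum_support_right]
  exact sum_eq_zero fun n hn => by
    rw [restrictTo_apply_of_not_mem φ (Set.disjoint_left.mp h hn), zero_mul]

lemma gNorm_smul (K : Set Func) {c : ℝ} (hc : 0 ≤ c) (x : Func) :
    gNorm K (c • x) = c * gNorm K x := by
  rw [gNorm, gNorm, ← smul_eq_mul, ← Real.sSup_smul_of_nonneg hc, ← Set.image_smul,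
    Set.image_image]
  simp only [dot_smul_right, smul_eq_mul]

structure IsNormingSet (K : Set Func) : Prop where
  abs_apply_le_one : ∀ φ ∈ K, ∀ n, |φ n| ≤ 1
  single_mem : ∀ n, Finsupp.single n 1 ∈ K
  neg_mem : ∀ φ ∈ K, -φ ∈ K

namespace IsNormingSet

variable {K : Set Func}

lemma nonempty (hK : IsNormingSet K) : K.Nonempty := ⟨_, hK.single_mem 0⟩

lemma bddAbove_dot (hK : IsNormingSet K) (x : Func) : BddAbove ((fun φ => dot φ x) '' K) :=
  ⟨∑ n ∈ x.support, |x n|, by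
    rintro _ ⟨φ, hφ, rfl⟩
    exact (le_abs_self _).trans (abs_dot_le (hK.abs_apply_le_one φ hφ) x)⟩

lemma dot_le_gNorm (hK : IsNormingSet K) {φ : Func} (hφ : φ ∈ K) (x : Func) : dot φ x ≤ gNorm K x :=
  le_csSup (hK.bddAbove_dot x) (Set.mem_image_of_mem _ hφ)

lemma gNorm_le (hK : IsNormingSet K) {x : Func} {c : ℝ} (h : ∀ φ ∈ K, dot φ x ≤ c) :
    gNorm K x ≤ c :=
  csSup_le (hK.nonempty.image _) (Set.forall_mem_image.mpr h)

lemma exists_dot_gt (hK : IsNormingSet K) {x : Func} {c : ℝ} (hc : c < gNorm K x) :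
    ∃ φ ∈ K, c < dot φ x := by
  obtain ⟨_, ⟨φ, hφ, rfl⟩, hcφ⟩ := exists_lt_of_lt_csSup (hK.nonempty.image _) hc
  exact ⟨φ, hφ, hcφ⟩

lemma exists_seq_tendsto_gNorm (hK : IsNormingSet K) (x : Func) :
    ∃ φ : ℕ → Func, (∀ m, φ m ∈ K) ∧ Tendsto (fun m => dot (φ m) x) atTop (𝓝 (gNorm K x)) := by
  obtain ⟨r, -, hr, hrK⟩ := exists_seq_tendsto_sSup (hK.nonempty.image _) (hK.bddAbove_dot x)
  choose φ hφK hφr using hrK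
  exact ⟨φ, hφK, by rwa [show (fun m => dot (φ m) x) = r from funext hφr]⟩

lemma abs_apply_le_gNorm (hK : IsNormingSet K) (x : Func) (n : ℕ) : |x n| ≤ gNorm K x := by
  have h := hK.dot_le_gNorm (hK.single_mem n) x
  have h' := hK.dot_le_gNorm (hK.neg_mem _ (hK.single_mem n)) x
  rw [dot_single_left] at h
  rw [dot_neg_left, dot_single_left] at h'
  exact abs_le'.mpr ⟨h, h'⟩

lemma gNorm_nonneg (hK : IsNormingSet K) (x : Func) : 0 ≤ gNorm K x :=
  (abs_nonneg _).trans (hK.abs_apply_le_gNorm x 0)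

lemma gNorm_pos (hK : IsNormingSet K) {x : Func} (hx : x ≠ 0) : 0 < gNorm K x := by
  obtain ⟨n, hn⟩ := Finsupp.support_nonempty_iff.mpr hx
  exact (abs_pos.mpr (Finsupp.mem_support_iff.mp hn)).trans_le (hK.abs_apply_le_gNorm x n)

lemma gNorm_zero (hK : IsNormingSet K) : gNorm K 0 = 0 :=
  (hK.gNorm_le fun φ _ => by rw [← zero_smul ℝ (0 : Func), dot_smul_right, zero_mul]).antisymm
    (hK.gNorm_nonneg 0)

lemma gNorm_inv_smul_self (hK : IsNormingSet K) {x : Func} (hx : x ≠ 0) :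
    gNorm K ((gNorm K x)⁻¹ • x) = 1 := by
  rw [gNorm_smul K (inv_nonneg.mpr (hK.gNorm_nonneg x)), inv_mul_cancel₀ (hK.gNorm_pos hx).ne']

end IsNormingSet

lemma SuccSupp.mono {u u' v v' : Func} (h : SuccSupp u v) (hu : u'.support ⊆ u.support)
    (hv : v'.support ⊆ v.support) : SuccSupp u' v' :=
  fun a ha b hb => h a (hu ha) b (hv hb)

lemma SuccSupp.smul {u v : Func} (h : SuccSupp u v) (a b : ℝ) : SuccSupp (a • u) (b • v) :=
  h.mono Finsupp.support_smul Finsupp.support_smul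

lemma SuccSupp.trans {u v w : Func} (h₁ : SuccSupp u v) (h₂ : SuccSupp v w) (hv : v ≠ 0) :
    SuccSupp u w := by
  obtain ⟨n, hn⟩ := Finsupp.support_nonempty_iff.mpr hv
  exact fun a ha b hb => (h₁ a ha n hn).trans (h₂ n hn b hb)

lemma SuccSupp.sum_left {ι : Type*} {s : Finset ι} {u : ι → Func} {v : Func}
    (h : ∀ i ∈ s, SuccSupp (u i) v) : SuccSupp (∑ i ∈ s, u i) v := fun a ha b hb => by
  obtain ⟨i, hi, hai⟩ := mem_biUnion.mp (Finsupp.support_finsetSum ha)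
  exact h i hi a hai b hb

lemma SuccSupp.sum_right {ι : Type*} {s : Finset ι} {u : Func} {v : ι → Func}
    (h : ∀ i ∈ s, SuccSupp u (v i)) : SuccSupp u (∑ i ∈ s, v i) := fun a ha b hb => by
  obtain ⟨i, hi, hbi⟩ := mem_biUnion.mp (Finsupp.support_finsetSum hb)
  exact h i hi a ha b hbi

lemma minsupp_le {x : Func} {n : ℕ} (hn : n ∈ x.support) : minsupp x ≤ n :=
  Nat.sInf_le (Finsupp.mem_support_iff.mp hn)

lemma le_maxsupp {x : Func} {n : ℕ} (hn : n ∈ x.support) : n ≤ maxsupp x :=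
  le_sup (f := id) hn

lemma minsupp_mem_support {x : Func} (hx : x ≠ 0) : minsupp x ∈ x.support := by
  obtain ⟨n, hn⟩ := Finsupp.support_nonempty_iff.mpr hx
  exact Finsupp.mem_support_iff.mpr
    (Nat.sInf_mem (s := {n | x n ≠ 0}) ⟨n, Finsupp.mem_support_iff.mp hn⟩)

lemma maxsupp_mem_support {x : Func} (hx : x ≠ 0) : maxsupp x ∈ x.support := by
  obtain ⟨n, hn, hmax⟩ := exists_mem_eq_sup _ (Finsupp.support_nonempty_iff.mpr hx) id
  rw [maxsupp, hmax]
  exact hn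

lemma support_subset_Icc (x : Func) : ↑x.support ⊆ Set.Icc (minsupp x) (maxsupp x) :=
  fun _ hn => ⟨minsupp_le hn, le_maxsupp hn⟩

lemma SuccSupp.maxsupp_lt_minsupp {x y : Func} (h : SuccSupp x y) (hx : x ≠ 0) (hy : y ≠ 0) :
    maxsupp x < minsupp y :=
  h _ (maxsupp_mem_support hx) _ (minsupp_mem_support hy)

section LowerEstimate

variable {K : Set Func} {N : ℕ} {θ : ℝ} {d : ℕ} {u : Fin d → Func}

/-- Restricting each `φ i` to the interval spanned by `supp u i` produces successive functionals
whose `(A_N, θ)`-combination sees each `u i` only through `φ i`. -/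
lemma IsNormingSet.mul_sum_dot_le_gNorm_sum (hK : IsNormingSet K) (hKint : IntervalClosed K)
    (hop : ∀ g, IsAOp K N θ g → g ∈ K) (hd0 : 0 < d) (hdN : d ≤ N) (hu0 : ∀ i, u i ≠ 0)
    (hus : ∀ i₁ i₂, i₁ < i₂ → SuccSupp (u i₁) (u i₂)) {φ : Fin d → Func} (hφ : ∀ i, φ i ∈ K) :
    θ * ∑ i, dot (φ i) (u i) ≤ gNorm K (∑ i, u i) := by
  set E : Fin d → Set ℕ := fun i => Set.Icc (minsupp (u i)) (maxsupp (u i))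
  set ψ : Fin d → Func := fun i => restrictTo (E i) (φ i)
  have hE : ∀ i₁ i₂, i₁ < i₂ → ∀ a ∈ E i₁, ∀ b ∈ E i₂, a < b := fun i₁ i₂ h a ha b hb =>
    ha.2.trans_lt ((hus i₁ i₂ h).maxsupp_lt_minsupp (hu0 i₁) (hu0 i₂) |>.trans_le hb.1)
  have hψs : ∀ i₁ i₂, i₁ < i₂ → SuccSupp (ψ i₁) (ψ i₂) := fun i₁ i₂ h a ha b hb =>
    hE i₁ i₂ h a (mem_of_mem_support_restrictTo ha) b (mem_of_mem_support_restrictTo hb)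
  have hψK : θ • ∑ i, ψ i ∈ K :=
    hop _ ⟨d, ψ, hd0, hdN, fun i => hKint _ (hφ i) _ Set.ordConnected_Icc, hψs, rfl⟩
  have hcross : ∀ i i', i ≠ i' → dot (ψ i) (u i') = 0 := fun i i' hne =>
    dot_restrictTo_of_disjoint _ <| Set.disjoint_left.mpr fun n hn hnE => by
      have hn' := support_subset_Icc (u i') hn
      rcases hne.lt_or_gt with h | h
      · exact (hE i i' h n hnE n hn').false
      · exact (hE i' i h n hn' n hnE).false
  calc θ * ∑ i, dot (φ i) (u i)
      = dot (θ • ∑ i, ψ i) (∑ i, u i) := by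
        rw [dot_smul_left, dot_sum_left]
        congr 1
        refine sum_congr rfl fun i _ => ?_
        rw [dot_sum_right, sum_eq_single i (fun i' _ h => hcross i i' h.symm) (by simp)]
        exact (dot_restrictTo_of_support_subset _ (support_subset_Icc (u i))).symm
    _ ≤ gNorm K (∑ i, u i) := hK.dot_le_gNorm hψK _

lemma IsNormingSet.mul_sum_gNorm_le_gNorm_sum (hK : IsNormingSet K) (hKint : IntervalClosed K)
    (hop : ∀ g, IsAOp K N θ g → g ∈ K) (hd0 : 0 < d) (hdN : d ≤ N) (hu0 : ∀ i, u i ≠ 0)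
    (hus : ∀ i₁ i₂, i₁ < i₂ → SuccSupp (u i₁) (u i₂)) :
    θ * ∑ i, gNorm K (u i) ≤ gNorm K (∑ i, u i) := by
  choose φ hφK hφ using fun i => hK.exists_seq_tendsto_gNorm (u i)
  exact le_of_tendsto' ((tendsto_finsetSum _ fun i _ => hφ i).const_mul θ) fun m =>
    hK.mul_sum_dot_le_gNorm_sum hKint hop hd0 hdN hu0 hus fun i => hφK i m

end LowerEstimate

/-- Up to scaling, a `c⁻¹`-`ℓ₁^k` average in `V`. -/
def HasL1BlockWith (K : Set Func) (V : Submodule ℝ Func) (k : ℕ) (c : ℝ) : Prop :=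
  ∃ x : Fin k → Func, (∀ i, x i ∈ V) ∧ (∀ i₁ i₂, i₁ < i₂ → SuccSupp (x i₁) (x i₂)) ∧
    ∃ B > 0, (∀ i, gNorm K (x i) ≤ B) ∧ c * k * B ≤ gNorm K (∑ i, x i)

lemma sum_range_mul_eq_sum_sum {M : Type*} [AddCommMonoid M] (f : ℕ → M) (k P : ℕ) :
    ∑ t ∈ range (k * P), f t = ∑ i ∈ range k, ∑ t ∈ range P, f (i * P + t) := by
  induction k with
  | zero => simp
  | succ k ih => rw [add_one_mul, sum_range_add, ih, sum_range_succ]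

/-- Group the `k^{s+1}` vectors into `k` consecutive sums of `k^s` vectors. -/
lemma gNorm_sum_range_pow_le_of_not_hasL1BlockWith {K : Set Func} {V : Submodule ℝ Func}
    {k : ℕ} {c : ℝ} (hno : ¬ HasL1BlockWith K V k c) (hck : 0 < c * k) (s : ℕ) :
    ∀ w : ℕ → Func, (∀ t, w t ∈ V) → (∀ t₁ t₂, t₁ < t₂ → SuccSupp (w t₁) (w t₂)) →
      (∀ t, gNorm K (w t) ≤ 1) → gNorm K (∑ t ∈ range (k ^ s), w t) ≤ (c * k) ^ s := by
  induction s with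
  | zero => intro w _ _ hw1; simpa using hw1 0
  | succ s ih =>
    intro w hwV hws hw1
    set z : Fin k → Func := fun i => ∑ t ∈ range (k ^ s), w (i * k ^ s + t)
    have hzV : ∀ i, z i ∈ V := fun i => V.sum_mem fun t _ => hwV _
    have hzs : ∀ i₁ i₂, i₁ < i₂ → SuccSupp (z i₁) (z i₂) := fun i₁ i₂ h =>
      SuccSupp.sum_left fun t₁ ht₁ => SuccSupp.sum_right fun t₂ _ => hws _ _ <| by
        have : (i₁.1 + 1) * k ^ s ≤ i₂.1 * k ^ s := Nat.mul_le_mul_right _ h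
        rw [mem_range] at ht₁
        linarith
    have hzB : ∀ i, gNorm K (z i) ≤ (c * k) ^ s := fun i =>
      ih _ (fun t => hwV _) (fun t₁ t₂ h => hws _ _ (by omega)) fun t => hw1 _
    have hsum : ∑ t ∈ range (k ^ (s + 1)), w t = ∑ i, z i := by
      rw [pow_succ', sum_range_mul_eq_sum_sum]
      exact (Fin.sum_univ_eq_sum_range (fun i => ∑ t ∈ range (k ^ s), w (i * k ^ s + t)) k).symm
    rw [hsum, pow_succ']
    exact le_of_not_gt fun h => hno ⟨z, hzV, hzs, _, pow_pos hck s, hzB, h.le⟩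

lemma IsNormingSet.exists_normalized_extension {K : Set Func} (hK : IsNormingSet K) {n : ℕ}
    (v : Fin n → Func) (hv0 : ∀ t, v t ≠ 0) (hvs : ∀ t₁ t₂, t₁ < t₂ → SuccSupp (v t₁) (v t₂)) :
    ∃ w : ℕ → Func, (∀ t, w t ∈ Submodule.span ℝ (Set.range v)) ∧
      (∀ t₁ t₂, t₁ < t₂ → SuccSupp (w t₁) (w t₂)) ∧ (∀ t, gNorm K (w t) ≤ 1) ∧
      ∀ t < n, gNorm K (w t) = 1 := by
  set w : ℕ → Func := fun t => if h : t < n then (gNorm K (v ⟨t, h⟩))⁻¹ • v ⟨t, h⟩ else 0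
  have hw_of_lt : ∀ t (h : t < n), w t = (gNorm K (v ⟨t, h⟩))⁻¹ • v ⟨t, h⟩ :=
    fun t h => dif_pos h
  have hw_of_ge : ∀ t, ¬ t < n → w t = 0 := fun t h => dif_neg h
  have hw_norm : ∀ t < n, gNorm K (w t) = 1 := fun t h => by
    rw [hw_of_lt t h, hK.gNorm_inv_smul_self (hv0 _)]
  refine ⟨w, fun t => ?_, fun t₁ t₂ h => ?_, fun t => ?_, hw_norm⟩
  · by_cases h : t < n
    · rw [hw_of_lt t h]
      exact Submodule.smul_mem _ _ (Submodule.subset_span ⟨_, rfl⟩)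
    · rw [hw_of_ge t h]
      exact Submodule.zero_mem _
  · by_cases h₂ : t₂ < n
    · rw [hw_of_lt t₁ (h.trans h₂), hw_of_lt t₂ h₂]
      exact (hvs ⟨t₁, _⟩ ⟨t₂, h₂⟩ h).smul _ _
    · rw [hw_of_ge t₂ h₂]
      intro _ _ _ hb
      simp at hb
  · by_cases h : t < n
    · exact (hw_norm t h).le
    · rw [hw_of_ge t h, hK.gNorm_zero]
      exact zero_le_one

/-- The lower `ℓ₁` estimate of the `(A_N, θ)`-operations contradicts the upper estimate
`(c k)^s` as soon as `c^s < θ`. -/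
lemma IsNormingSet.hasL1BlockWith {K : Set Func} (hK : IsNormingSet K)
    (hKint : IntervalClosed K) {N : ℕ} {θ : ℝ} (hop : ∀ g, IsAOp K N θ g → g ∈ K)
    {k s : ℕ} (hk : 0 < k) (hkN : k ^ s ≤ N) {c : ℝ} (hc : 0 < c) (hcθ : c ^ s < θ)
    (v : Fin (k ^ s) → Func) (hv0 : ∀ t, v t ≠ 0)
    (hvs : ∀ t₁ t₂, t₁ < t₂ → SuccSupp (v t₁) (v t₂)) :
    HasL1BlockWith K (Submodule.span ℝ (Set.range v)) k c := by
  by_contra hno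
  obtain ⟨w, hwV, hws, hw1, hw_norm⟩ := hK.exists_normalized_extension v hv0 hvs
  have hw0 : ∀ t : Fin (k ^ s), w t ≠ 0 := fun t h0 => by
    simpa [h0, hK.gNorm_zero] using hw_norm t t.2
  have hupper := gNorm_sum_range_pow_le_of_not_hasL1BlockWith hno
    (mul_pos hc (Nat.cast_pos.mpr hk)) s w hwV hws hw1
  have hlower := hK.mul_sum_gNorm_le_gNorm_sum hKint hop (pow_pos hk s) hkN
    (u := fun t : Fin (k ^ s) => w t) hw0 fun t₁ t₂ h => hws _ _ h
  rw [Fin.sum_univ_eq_sum_range (fun t => gNorm K (w t)),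
    sum_congr rfl fun t ht => hw_norm t (mem_range.mp ht),
    Fin.sum_univ_eq_sum_range w] at hlower
  have : θ * (k : ℝ) ^ s ≤ c ^ s * (k : ℝ) ^ s := by
    simpa [mul_pow] using hlower.trans hupper
  exact hcθ.not_ge (le_of_mul_le_mul_right this (pow_pos (Nat.cast_pos.mpr hk) s))

lemma sum_le_card_add_card_filter_mul_half {ι : Type*} (s : Finset ι) {a : ι → ℝ} {B : ℝ}
    (h : ∀ i ∈ s, a i ≤ B) :
    ∑ i ∈ s, a i ≤ (#s + #(s.filter fun i => B / 2 < a i)) * (B / 2) := by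
  have hbig : ∑ i ∈ s.filter (fun i => B / 2 < a i), a i
      ≤ #(s.filter fun i => B / 2 < a i) * B :=
    (sum_le_card_nsmul _ _ _ fun i hi => h i (mem_filter.mp hi).1).trans_eq (nsmul_eq_mul _ _)
  have hsmall : ∑ i ∈ s.filter (fun i => ¬ B / 2 < a i), a i
      ≤ #(s.filter fun i => ¬ B / 2 < a i) * (B / 2) :=
    (sum_le_card_nsmul _ _ _ fun i hi => not_lt.mp (mem_filter.mp hi).2).trans_eq
      (nsmul_eq_mul _ _)
  have hcard : (#(s.filter fun i => B / 2 < a i) : ℝ) + #(s.filter fun i => ¬ B / 2 < a i)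
      = #s := by exact_mod_cast card_filter_add_card_filter_not _
  rw [← sum_filter_add_sum_filter_not s fun i => B / 2 < a i, ← hcard]
  linarith

namespace HasL1BlockWith

variable {K : Set Func} {V : Submodule ℝ Func} {k : ℕ} {c : ℝ}

lemma mono (h : HasL1BlockWith K V k c) {W : Submodule ℝ Func} (hVW : V ≤ W) :
    HasL1BlockWith K W k c := by
  obtain ⟨x, hxV, hxs, hB⟩ := h
  exact ⟨x, fun i => hVW (hxV i), hxs, hB⟩

/-- Rescaling the blocks so that their average has norm `1` makes each of them of norm
`≤ c⁻¹ ≤ 2`. -/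
lemma exists_two_average (h : HasL1BlockWith K V k c) (hk : 0 < k) (hc : 1 / 2 ≤ c) :
    ∃ x : Fin k → Func, (∀ i, x i ∈ V) ∧ (∀ i₁ i₂, i₁ < i₂ → SuccSupp (x i₁) (x i₂)) ∧
      (∀ i, gNorm K (x i) ≤ 2) ∧ gNorm K ((k : ℝ)⁻¹ • ∑ i, x i) = 1 := by
  obtain ⟨x, hxV, hxs, B, hB, hxB, hsum⟩ := h
  set S := gNorm K (∑ i, x i)
  have hkR : (0 : ℝ) < k := Nat.cast_pos.mpr hk
  have hS : 0 < S := lt_of_lt_of_le (by positivity) hsum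
  have hr : (0 : ℝ) ≤ k / S := by positivity
  refine ⟨fun i => (k / S) • x i, fun i => V.smul_mem _ (hxV i),
    fun i₁ i₂ h => (hxs i₁ i₂ h).smul _ _, fun i => ?_, ?_⟩
  · rw [gNorm_smul K hr, div_mul_eq_mul_div, div_le_iff₀ hS]
    calc k * gNorm K (x i) ≤ k * B := mul_le_mul_of_nonneg_left (hxB i) hkR.le
      _ ≤ 2 * (c * k * B) := by nlinarith [mul_pos hkR hB]
      _ ≤ 2 * S := by linarith
  · rw [← smul_sum, smul_smul, gNorm_smul K (by positivity)]
    field_simp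
    rfl

/-- Among `2k + 1` blocks forming a `3/4`-`ℓ₁` sequence, a norming functional of their sum
takes a value `> B/2` on more than `k` of them; normalizing those gives the `z i`. -/
lemma exists_normalized_sum_ge (hK : IsNormingSet K) (h : HasL1BlockWith K V (2 * k + 1) (3 / 4)) :
    ∃ z : Fin k → Func, (∀ i, z i ∈ V) ∧ (∀ i₁ i₂, i₁ < i₂ → SuccSupp (z i₁) (z i₂)) ∧
      (∀ i, gNorm K (z i) = 1) ∧ (k : ℝ) / 2 ≤ gNorm K (∑ i, z i) := by
  classical
  obtain ⟨x, hxV, hxs, B, hB, hxB, hsum⟩ := h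
  obtain ⟨φ, hφK, hφ⟩ := hK.exists_dot_gt (x := ∑ i, x i)
    (c := 3 / 4 * ↑(2 * k + 1) * B - B / 4) (by linarith)
  rw [dot_sum_right] at hφ
  set G := univ.filter fun i => B / 2 < dot φ (x i)
  have hcount := sum_le_card_add_card_filter_mul_half univ
    (a := fun i => dot φ (x i)) fun i _ => (hK.dot_le_gNorm hφK _).trans (hxB i)
  have hG : k < #G := by
    by_contra hG
    have : (#G : ℝ) ≤ k := by exact_mod_cast not_lt.mp hG
    rw [card_univ, Fintype.card_fin] at hcount
    push_cast at hφ hcount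
    nlinarith
  set e := G.orderEmbOfCardLe hG.le
  have hxe : ∀ i, B / 2 < dot φ (x (e i)) := fun i =>
    (mem_filter.mp (G.orderEmbOfCardLe_mem hG.le i)).2
  have hxe0 : ∀ i, x (e i) ≠ 0 := fun i h0 => by
    have := hxe i
    rw [h0, ← zero_smul ℝ (0 : Func), dot_smul_right, zero_mul] at this
    linarith
  have hhalf : ∀ i, 1 / 2 ≤ dot φ ((gNorm K (x (e i)))⁻¹ • x (e i)) := fun i => by
    have hpos := hK.gNorm_pos (hxe0 i)
    rw [dot_smul_right, inv_mul_eq_div, le_div_iff₀ hpos]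
    linarith [hxB (e i), hxe i]
  refine ⟨fun i => (gNorm K (x (e i)))⁻¹ • x (e i), fun i => V.smul_mem _ (hxV _),
    fun i₁ i₂ h => (hxs _ _ (e.strictMono h)).smul _ _,
    fun i => hK.gNorm_inv_smul_self (hxe0 i), ?_⟩
  calc (k : ℝ) / 2 = ∑ _i : Fin k, (1 / 2 : ℝ) := by
        rw [sum_const, card_univ, Fintype.card_fin, nsmul_eq_mul]; ring
    _ ≤ dot φ (∑ i, (gNorm K (x (e i)))⁻¹ • x (e i)) := by
      rw [dot_sum_right]
      exact sum_le_sum fun i _ => hhalf i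
    _ ≤ _ := hK.dot_le_gNorm hφK _

end HasL1BlockWith

lemma sum_apply_eq_of_succSupp {d : ℕ} {f : Fin d → Func}
    (hs : ∀ i₁ i₂, i₁ < i₂ → SuccSupp (f i₁) (f i₂)) {n : ℕ} {i₀ : Fin d} (hi₀ : f i₀ n ≠ 0) :
    (∑ i, f i) n = f i₀ n := by
  rw [Finsupp.finsetSum_apply]
  refine sum_eq_single i₀ (fun i _ hne => by_contra fun hi => ?_) (by simp)
  have hn := Finsupp.mem_support_iff.mpr hi
  have hn₀ := Finsupp.mem_support_iff.mpr hi₀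
  rcases hne.lt_or_gt with h | h
  · exact lt_irrefl n (hs _ _ h n hn n hn₀)
  · exact lt_irrefl n (hs _ _ h n hn₀ n hn)

lemma abs_sum_apply_le_of_succSupp {d : ℕ} {f : Fin d → Func}
    (hs : ∀ i₁ i₂, i₁ < i₂ → SuccSupp (f i₁) (f i₂)) {c : ℝ} (hc : 0 ≤ c)
    (hf : ∀ i n, |f i n| ≤ c) (n : ℕ) : |(∑ i, f i) n| ≤ c := by
  by_cases h : ∃ i, f i n ≠ 0
  · obtain ⟨i₀, hi₀⟩ := h
    rw [sum_apply_eq_of_succSupp hs hi₀]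
    exact hf i₀ n
  · simp only [not_exists, not_not] at h
    rwa [Finsupp.finsetSum_apply, sum_eq_zero fun i _ => h i, abs_zero]

lemma sum_half_pow_succ_le_one (T : Finset ℕ) : ∑ t ∈ T, (1 / 2 : ℝ) ^ (t + 1) ≤ 1 := by
  have h := summable_geometric_two.sum_le_tsum T fun t _ => by positivity
  rw [tsum_geometric_two] at h
  simp only [pow_succ, ← sum_mul]
  linarith

lemma abs_sum_smul_apply_le_one {d : ℕ} {a : Fin d → ℝ} (ha : ∀ i, |a i| ≤ 1) (ψ : Fin d → Func)
    (n : ℕ) {J : Fin d → ℕ} (hψ : ∀ i, |ψ i n| ≤ (1 / 2) ^ (J i + 1))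
    (hJ : ∀ i₁ i₂, ψ i₁ n ≠ 0 → ψ i₂ n ≠ 0 → J i₁ = J i₂ → i₁ = i₂) :
    |(∑ i, a i • ψ i) n| ≤ 1 := by
  classical
  set s := univ.filter fun i => ψ i n ≠ 0
  calc |(∑ i, a i • ψ i) n| ≤ ∑ i, |ψ i n| := by
        rw [Finsupp.finsetSum_apply]
        refine (abs_sum_le_sum_abs _ _).trans (sum_le_sum fun i _ => ?_)
        rw [Finsupp.smul_apply, smul_eq_mul, abs_mul]
        exact mul_le_of_le_one_left (abs_nonneg _) (ha i)
    _ = ∑ i ∈ s, |ψ i n| :=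
        (sum_filter_of_ne fun i _ h => abs_ne_zero.mp h).symm
    _ ≤ ∑ i ∈ s, (1 / 2 : ℝ) ^ (J i + 1) := sum_le_sum fun i _ => hψ i
    _ = ∑ t ∈ s.image J, (1 / 2 : ℝ) ^ (t + 1) :=
        (sum_image (f := fun t => (1 / 2 : ℝ) ^ (t + 1)) fun i₁ h₁ i₂ h₂ =>
          hJ i₁ i₂ (mem_filter.mp h₁).2 (mem_filter.mp h₂).2).symm
    _ ≤ 1 := sum_half_pow_succ_le_one _

lemma mseq_pos (t : ℕ) : 0 < mseq t := Nat.pow_pos two_pos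

lemma inv_mseq_le_half_pow (t : ℕ) : ((mseq t : ℝ))⁻¹ ≤ (1 / 2) ^ (t + 1) := by
  rw [mseq, Nat.cast_pow, Nat.cast_ofNat, ← inv_pow, ← one_div]
  exact pow_le_pow_of_le_one (by norm_num) (by norm_num) (Nat.lt_pow_self (by norm_num))

lemma inv_mseq_le_one (t : ℕ) : ((mseq t : ℝ))⁻¹ ≤ 1 :=
  (inv_mseq_le_half_pow t).trans (pow_le_one₀ (by norm_num) (by norm_num))

lemma inv_mseq_sq_le_one (t : ℕ) : ((mseq t : ℝ) ^ 2)⁻¹ ≤ 1 :=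
  inv_le_one_of_one_le₀ (one_le_pow₀ (Nat.one_le_cast.mpr (mseq_pos t)))

lemma inv_mseq_sq_le_half_pow {j : ℕ} (hj : 1 ≤ j) :
    ((mseq (2 * j - 1) : ℝ) ^ 2)⁻¹ ≤ (1 / 2) ^ (j + 1) := by
  have hm : (1 : ℝ) ≤ mseq (2 * j - 1) := Nat.one_le_cast.mpr (mseq_pos _)
  calc ((mseq (2 * j - 1) : ℝ) ^ 2)⁻¹ ≤ ((mseq (2 * j - 1) : ℝ))⁻¹ :=
        inv_anti₀ (by positivity) (le_self_pow₀ hm two_ne_zero)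
    _ ≤ (1 / 2) ^ (2 * j - 1 + 1) := inv_mseq_le_half_pow _
    _ ≤ (1 / 2) ^ (j + 1) := pow_le_pow_of_le_one (by norm_num) (by norm_num) (by omega)

def unitCoordBall : Set Func := {f | ∀ n, |f n| ≤ 1}

lemma IsAOp.abs_apply_le {N : ℕ} {θ : ℝ} {g : Func} (hg : IsAOp unitCoordBall N θ g)
    (hθ : 0 ≤ θ) (n : ℕ) : |g n| ≤ θ := by
  obtain ⟨d, f, -, -, hf, hs, rfl⟩ := hg
  rw [Finsupp.smul_apply, smul_eq_mul, abs_mul, abs_of_nonneg hθ]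
  exact mul_le_of_le_one_right hθ (abs_sum_apply_le_of_succSupp hs zero_le_one hf n)

lemma abs_apply_le_of_mem_G1set {j : ℕ} {φ : Func} (hφ : φ ∈ G1set j) (n : ℕ) :
    |φ n| ≤ ((mseq (2 * j - 1) : ℝ) ^ 2)⁻¹ := by
  obtain ⟨B, ε, -, hε, rfl⟩ := hφ
  have hsum : |(∑ k ∈ B, ε k • Finsupp.single k (1 : ℝ)) n| ≤ 1 := by
    simp only [Finsupp.finsetSum_apply, Finsupp.smul_apply, Finsupp.single_apply, smul_eq_mul,
      mul_ite, mul_one, mul_zero, sum_ite_eq']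
    split_ifs
    · rcases hε n with h | h <;> simp [h]
    · simp
  rw [Finsupp.smul_apply, smul_eq_mul, abs_mul, abs_of_nonneg (by positivity)]
  exact mul_le_of_le_one_right (by positivity) hsum

/-- The members of a special sequence have successive supports, so a coordinate of a special
functional is a coordinate of one of them. -/
lemma WeightedInd.exists_index {Sch : SchreierSystem} {ξ : Ordinal.{0}} {cd : CodingOne}
    {φ : Func} {I : Set ℕ} (h : WeightedInd Sch ξ cd φ I) {n : ℕ} (hn : φ n ≠ 0) :
    ∃ j ∈ I, 1 ≤ j ∧ |φ n| ≤ ((mseq (2 * j - 1) : ℝ) ^ 2)⁻¹ := by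
  rcases h with ⟨j, hj, hφ, rfl⟩ | ⟨d, f, j, ε, E, hspec, hε, -, rfl, rfl⟩
  · exact ⟨j, rfl, hj, abs_apply_le_of_mem_G1set hφ n⟩
  obtain ⟨-, hf, hfs, -⟩ := hspec
  have hgs : ∀ i₁ i₂, i₁ < i₂ →
      SuccSupp (restrictTo E (ε i₁ • f i₁)) (restrictTo E (ε i₂ • f i₂)) := fun i₁ i₂ h =>
    ((hfs i₁ i₂ h).smul _ _).mono (support_restrictTo_subset _ _) (support_restrictTo_subset _ _)
  obtain ⟨i₀, -, hi₀⟩ := exists_ne_zero_of_sum_ne_zero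
    (by rwa [← Finsupp.finsetSum_apply] : ∑ i, restrictTo E (ε i • f i) n ≠ 0)
  have hnE : n ∈ E := by_contra fun h => hi₀ (restrictTo_apply_of_not_mem _ h)
  rw [restrictTo_apply_of_mem _ hnE, Finsupp.smul_apply, smul_eq_mul] at hi₀
  refine ⟨j i₀, ⟨i₀, rfl, fun h0 => ?_⟩, (hf i₀).1, ?_⟩
  · have := DFunLike.congr_fun h0 n
    rw [restrictTo_apply_of_mem _ hnE, Finsupp.coe_zero, Pi.zero_apply] at this
    exact hi₀ (by rw [this, mul_zero])
  · rw [sum_apply_eq_of_succSupp hgs (i₀ := i₀) (by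
      rwa [restrictTo_apply_of_mem _ hnE, Finsupp.smul_apply, smul_eq_mul]),
      restrictTo_apply_of_mem _ hnE, Finsupp.smul_apply, smul_eq_mul, abs_mul,
      show |ε i₀| = 1 by rcases hε i₀ with h | h <;> simp [h], one_mul]
    exact abs_apply_le_of_mem_G1set (hf i₀).2.1 n

lemma abs_le_one_of_sum_sq_le_one {d : ℕ} {a : Fin d → ℝ} (h : ∑ i, a i ^ 2 ≤ 1) (i : Fin d) :
    |a i| ≤ 1 :=
  (sq_le_one_iff_abs_le_one _).mp
    ((single_le_sum (fun i _ => sq_nonneg (a i)) (mem_univ i)).trans h)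

lemma WeightedInd.abs_apply_le_one {Sch : SchreierSystem} {ξ : Ordinal.{0}} {cd : CodingOne}
    {φ : Func} {I : Set ℕ} (h : WeightedInd Sch ξ cd φ I) (n : ℕ) : |φ n| ≤ 1 := by
  by_cases hn : φ n = 0
  · simp [hn]
  obtain ⟨j, -, -, hle⟩ := h.exists_index hn
  exact hle.trans (inv_mseq_sq_le_one _)

/-- In an `ℓ₂`-combination the index sets are disjoint, so each coordinate is hit by distinct
weights `m_{2j-1}^{-2} ≤ 2^{-(j+1)}`. -/
lemma Gl2_subset_unitCoordBall (Sch : SchreierSystem) (ξ : Ordinal.{0}) (cd : CodingOne) :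
    Gl2 Sch ξ cd ⊆ unitCoordBall := by
  rintro _ ⟨d, ψ, I, a, ha, hψ, hdisj, rfl⟩ n
  have hJ : ∀ i, ∃ j, ψ i n ≠ 0 → j ∈ I i ∧ |ψ i n| ≤ (1 / 2) ^ (j + 1) := fun i => by
    by_cases hn : ψ i n = 0
    · exact ⟨0, fun h => (h hn).elim⟩
    obtain ⟨j, hjI, hj, hle⟩ := (hψ i).exists_index hn
    exact ⟨j, fun _ => ⟨hjI, hle.trans (inv_mseq_sq_le_half_pow hj)⟩⟩
  choose J hJ using hJ
  refine abs_sum_smul_apply_le_one (abs_le_one_of_sum_sq_le_one ha) ψ n (J := J) (fun i => ?_)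
    fun i₁ i₂ h₁ h₂ hJeq => by_contra fun hne =>
      Set.disjoint_left.mp (hdisj i₁ i₂ hne) (hJ i₁ h₁).1 (hJeq ▸ (hJ i₂ h₂).1)
  by_cases hn : ψ i n = 0
  · rw [hn, abs_zero]; positivity
  · exact (hJ i hn).2

lemma Gxi_subset_unitCoordBall (Sch : SchreierSystem) (ξ : Ordinal.{0}) (cd : CodingOne) :
    Gxi Sch ξ cd ⊆ unitCoordBall := by
  rintro φ (((⟨m, rfl | rfl⟩ | ⟨j, -, hφ⟩) | ⟨I, hφ⟩) | hφ) n
  · rw [Finsupp.single_apply]; split_ifs <;> simp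
  · rw [Finsupp.neg_apply, abs_neg, Finsupp.single_apply]; split_ifs <;> simp
  · exact (abs_apply_le_of_mem_G1set hφ n).trans (inv_mseq_sq_le_one _)
  · exact (show WeightedInd Sch ξ cd φ I from Or.inr hφ).abs_apply_le_one n
  · exact Gl2_subset_unitCoordBall Sch ξ cd hφ n

lemma kClosed_unitCoordBall (Sch : SchreierSystem) (ξ : Ordinal.{0}) (cd₁ : CodingOne)
    (cd₂ : CodingTwo) : KClosed Sch ξ cd₁ cd₂ unitCoordBall := by
  refine ⟨Gxi_subset_unitCoordBall Sch ξ cd₁, ?symm, ?interval, ?even, ?attractor, ?l2, ?convex⟩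
  case symm => exact fun f hf n => by rw [Finsupp.neg_apply, abs_neg]; exact hf n
  case interval =>
    intro f hf E _ n
    by_cases h : n ∈ E
    · rw [restrictTo_apply_of_mem f h]; exact hf n
    · rw [restrictTo_apply_of_not_mem f h, abs_zero]; exact zero_le_one
  case even =>
    exact fun j _ g hg n => (hg.abs_apply_le (by positivity) n).trans (inv_mseq_le_one _)
  case attractor =>
    intro j d f hf n
    obtain ⟨-, -, hfW, -, hfs, -⟩ := hf
    rw [Finsupp.smul_apply, smul_eq_mul, abs_mul, abs_of_nonneg (by positivity)]
    exact mul_le_one₀ (inv_mseq_le_one _) (abs_nonneg _)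
      (abs_sum_apply_le_of_succSupp hfs zero_le_one hfW n)
  case l2 =>
    intro d g jj lam hg hjj hlam n
    refine abs_sum_smul_apply_le_one (abs_le_one_of_sum_sq_le_one hlam) g n (J := jj)
      (fun i => ((hg i).2.abs_apply_le (by positivity) n).trans (inv_mseq_le_half_pow _))
      fun i₁ i₂ _ _ hJeq => by_contra fun hne => hjj i₁ i₂ hne (by rw [hJeq])
  case convex =>
    intro d g r hg hr hr1 n
    calc |(∑ i, (r i : ℝ) • g i) n| ≤ ∑ i, (r i : ℝ) * 1 := by
          rw [Finsupp.finsetSum_apply]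
          refine (abs_sum_le_sum_abs _ _).trans (sum_le_sum fun i _ => ?_)
          rw [Finsupp.smul_apply, smul_eq_mul, abs_mul, abs_of_nonneg (by exact_mod_cast hr i)]
          exact mul_le_mul_of_nonneg_left (hg i n) (by exact_mod_cast hr i)
      _ = 1 := by simp only [mul_one]; exact_mod_cast hr1

lemma IsAOp.mono {W W' : Set Func} (hWW' : W ⊆ W') {N : ℕ} {θ : ℝ} {g : Func}
    (hg : IsAOp W N θ g) : IsAOp W' N θ g := by
  obtain ⟨d, f, hd, hdN, hf, hs, rfl⟩ := hg
  exact ⟨d, f, hd, hdN, fun i => hWW' (hf i), hs, rfl⟩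

section Kxi

variable (Sch : SchreierSystem) (ξ : Ordinal.{0}) (cd₁ : CodingOne) (cd₂ : CodingTwo)

lemma Kxi_subset {W : Set Func} (hW : KClosed Sch ξ cd₁ cd₂ W) : Kxi Sch ξ cd₁ cd₂ ⊆ W :=
  Set.sInter_subset_of_mem hW

lemma isNormingSet_Kxi : IsNormingSet (Kxi Sch ξ cd₁ cd₂) where
  abs_apply_le_one _ hφ := Kxi_subset Sch ξ cd₁ cd₂ (kClosed_unitCoordBall Sch ξ cd₁ cd₂) hφ
  single_mem n := Set.mem_sInter.mpr fun _ hW => hW.1 (Or.inl (Or.inl (Or.inl ⟨n, Or.inl rfl⟩)))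
  neg_mem φ hφ := Set.mem_sInter.mpr fun _ hW => hW.2.1 φ (Kxi_subset Sch ξ cd₁ cd₂ hW hφ)

lemma intervalClosed_Kxi : IntervalClosed (Kxi Sch ξ cd₁ cd₂) := fun f hf E hE =>
  Set.mem_sInter.mpr fun _ hW => hW.2.2.1 f (Kxi_subset Sch ξ cd₁ cd₂ hW hf) E hE

lemma mem_Kxi_of_isAOp {j : ℕ} (hj : 1 ≤ j) {g : Func}
    (hg : IsAOp (Kxi Sch ξ cd₁ cd₂) (nseq (2 * j)) ((mseq (2 * j) : ℝ))⁻¹ g) :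
    g ∈ Kxi Sch ξ cd₁ cd₂ :=
  Set.mem_sInter.mpr fun _ hW => hW.2.2.2.1 j hj g (hg.mono (Kxi_subset Sch ξ cd₁ cd₂ hW))

end Kxi

lemma two_pow_le_nseq (t : ℕ) : 2 ^ (t + 1) ≤ nseq (t + 1) := by
  induction t with
  | zero => norm_num [nseq]
  | succ t ih =>
    calc 2 ^ (t + 2) = 2 * 2 ^ (t + 1) := by ring
      _ ≤ 2 * nseq (t + 1) := by omega
      _ ≤ (2 * nseq (t + 1)) ^ (3 * 5 ^ (t + 2)) := Nat.le_self_pow (by positivity) _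

lemma exists_le_nseq (k : ℕ) : ∃ j, 1 ≤ j ∧ k ≤ nseq (2 * j - 1) := by
  refine ⟨k + 1, by omega, ?_⟩
  have h := two_pow_le_nseq (2 * k)
  have : k < 2 ^ (2 * k + 1) :=
    Nat.lt_two_pow_self.trans_le (Nat.pow_le_pow_right two_pos (by omega))
  rw [show 2 * (k + 1) - 1 = 2 * k + 1 by omega]
  omega

lemma pow_le_nseq {k j : ℕ} (hj : 1 ≤ j) (hk : k ≤ nseq (2 * j - 1)) :
    k ^ (3 * 5 ^ (2 * j)) ≤ nseq (2 * j) := by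
  obtain ⟨i, rfl⟩ : ∃ i, j = i + 1 := ⟨j - 1, by omega⟩
  rw [show 2 * (i + 1) - 1 = 2 * i + 1 by omega] at hk
  rw [show 2 * (i + 1) = 2 * i + 2 by ring, nseq]
  exact Nat.pow_le_pow_left (hk.trans (Nat.le_mul_of_pos_left _ two_pos)) _

/-- `(3/4)^3 < 1/2`. -/
lemma three_quarters_pow_lt_inv_mseq (j : ℕ) :
    (3 / 4 : ℝ) ^ (3 * 5 ^ (2 * j)) < ((mseq (2 * j) : ℝ))⁻¹ := by
  rw [mseq, Nat.cast_pow, Nat.cast_ofNat, ← inv_pow, pow_mul]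
  exact pow_lt_pow_left₀ (by norm_num) (by norm_num) (by positivity)

/-- `n = k^{3·5^{2j}}` with `k ≤ n_{2j-1}`, so that the `(A_{n_{2j}}, m_{2j}^{-1})`-operations
apply. -/
lemma exists_hasL1BlockWith_Kxi (Sch : SchreierSystem) (ξ : Ordinal.{0}) (cd₁ : CodingOne)
    (cd₂ : CodingTwo) {k : ℕ} (hk : 0 < k) :
    ∃ n, ∀ v : Fin n → Func, (∀ t, v t ≠ 0) → (∀ t₁ t₂, t₁ < t₂ → SuccSupp (v t₁) (v t₂)) →
      HasL1BlockWith (Kxi Sch ξ cd₁ cd₂) (Submodule.span ℝ (Set.range v)) k (3 / 4) := by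
  obtain ⟨j, hj, hkj⟩ := exists_le_nseq k
  exact ⟨_, (isNormingSet_Kxi Sch ξ cd₁ cd₂).hasL1BlockWith (intervalClosed_Kxi Sch ξ cd₁ cd₂)
    (fun _ => mem_Kxi_of_isAOp Sch ξ cd₁ cd₂ hj) hk (pow_le_nseq hj hkj) (by norm_num)
    (three_quarters_pow_lt_inv_mseq j)⟩

lemma succSupp_of_lt {y : ℕ → Func} (hy0 : ∀ n, y n ≠ 0)
    (hysucc : ∀ n, SuccSupp (y n) (y (n + 1))) {a b : ℕ} (h : a < b) : SuccSupp (y a) (y b) := by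
  induction b, h using Nat.le_induction with
  | base => exact hysucc a
  | succ b _ ih => exact ih.trans (hysucc b) (hy0 b)

theorem statement_14_general (Sch : SchreierSystem) (ξ : Ordinal.{0})
    (cd₁ : CodingOne) (cd₂ : CodingTwo)
    (y : ℕ → Func) (hy0 : ∀ n, y n ≠ 0) (hysucc : ∀ n, SuccSupp (y n) (y (n + 1))) :
    (∀ ε : ℝ, 0 < ε → ∀ k : ℕ, mseq 2 ≤ k →
      ∃ x : Fin k → Func, (∀ i, x i ∈ Submodule.span ℝ (Set.range y)) ∧
        (∀ i₁ i₂ : Fin k, i₁ < i₂ → SuccSupp (x i₁) (x i₂)) ∧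
        (∀ i, gNorm (Kxi Sch ξ cd₁ cd₂) (x i) ≤ 2) ∧
        gNorm (Kxi Sch ξ cd₁ cd₂) ((k : ℝ)⁻¹ • ∑ i, x i) = 1) ∧
    (∀ k : ℕ, ∃ n : ℕ, ∀ ℓ : Fin n → ℕ, StrictMono ℓ →
      ∃ z : Fin k → Func,
        (∀ i, z i ∈ Submodule.span ℝ (Set.range fun t : Fin n => y (ℓ t))) ∧
        (∀ i₁ i₂ : Fin k, i₁ < i₂ → SuccSupp (z i₁) (z i₂)) ∧
        (∀ i, gNorm (Kxi Sch ξ cd₁ cd₂) (z i) = 1) ∧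
        (k : ℝ) / 2 ≤ gNorm (Kxi Sch ξ cd₁ cd₂) (∑ i, z i)) := by
  refine ⟨fun _ _ k hk => ?_, fun k => ?_⟩
  · have hk0 : 0 < k := (mseq_pos 2).trans_le hk
    obtain ⟨n, hn⟩ := exists_hasL1BlockWith_Kxi Sch ξ cd₁ cd₂ hk0
    have hblock := hn (fun t => y t) (fun t => hy0 t) fun t₁ t₂ h => succSupp_of_lt hy0 hysucc h
    refine (hblock.mono (Submodule.span_mono ?_)).exists_two_average hk0 (by norm_num)
    rintro _ ⟨t, rfl⟩
    exact ⟨t, rfl⟩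
  · obtain ⟨n, hn⟩ := exists_hasL1BlockWith_Kxi Sch ξ cd₁ cd₂ (Nat.succ_pos (2 * k))
    exact ⟨n, fun ℓ hℓ => (hn _ (fun t => hy0 _) fun t₁ t₂ h =>
      succSupp_of_lt hy0 hysucc (hℓ h)).exists_normalized_sum_ge (isNormingSet_Kxi Sch ξ cd₁ cd₂)⟩

/-- Every block sequence of `X_ξ` supports, for every `ε > 0` and every
`k ≥ m_2`, a normalized `2-ℓ1^k` average; in particular suitable long block subsequences
always contain `k` normalized blocks whose sum has norm at least `k/2`. -/
theorem statement_14 (Sch : SchreierSystem) (ξ : Ordinal.{0}) (hξ : ξ.card ≤ Cardinal.aleph0)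
    (cd₁ : CodingOne) (cd₂ : CodingTwo)
    (y : ℕ → Func) (hy0 : ∀ n, y n ≠ 0) (hysucc : ∀ n, SuccSupp (y n) (y (n + 1))) :
    (∀ ε : ℝ, 0 < ε → ∀ k : ℕ, mseq 2 ≤ k →
      ∃ x : Fin k → Func, (∀ i, x i ∈ Submodule.span ℝ (Set.range y)) ∧
        (∀ i₁ i₂ : Fin k, i₁ < i₂ → SuccSupp (x i₁) (x i₂)) ∧
        (∀ i, gNorm (Kxi Sch ξ cd₁ cd₂) (x i) ≤ 2) ∧
        gNorm (Kxi Sch ξ cd₁ cd₂) ((k : ℝ)⁻¹ • ∑ i, x i) = 1) ∧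
    (∀ k : ℕ, ∃ n : ℕ, ∀ ℓ : Fin n → ℕ, StrictMono ℓ →
      ∃ z : Fin k → Func,
        (∀ i, z i ∈ Submodule.span ℝ (Set.range fun t : Fin n => y (ℓ t))) ∧
        (∀ i₁ i₂ : Fin k, i₁ < i₂ → SuccSupp (z i₁) (z i₂)) ∧
        (∀ i, gNorm (Kxi Sch ξ cd₁ cd₂) (z i) = 1) ∧
        (k : ℝ) / 2 ≤ gNorm (Kxi Sch ξ cd₁ cd₂) (∑ i, z i)) :=
  statement_14_general Sch ξ cd₁ cd₂ y hy0 hysucc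

end HerL1
end
end
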